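/- Let r ≥ 2 and k ≥ 2. Let 𝓗 be a nonempty family of k-uniform hypergraphs and let F be a (k-1)-uniform hypergraph such that for every H ∈ 𝓗 and every vertex v of H, the link graph of v in H contains a copy of F. Then R̂_r(𝓗) ≥ (1/k)·R̂_r(F)·R_r(𝓗). -/

import Mathlib

open Finset

/-- A `k`-uniform hypergraph, given by its (finite) edge set; vertices are natural numbers. -/
def IsUniform (k : ℕ) (G : Finset (Finset ℕ)) : Prop :=
  ∀ e ∈ G, e.card = k

/-- The vertex set of a hypergraph. -/
def hVerts (G : Finset (Finset ℕ)) : Finset ℕ := G.biUnion id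

/-- `G` contains a copy of `H`, i.e. a subgraph isomorphic to `H`. -/
def IsCopy (H G : Finset (Finset ℕ)) : Prop :=
  ∃ f : ℕ → ℕ, Set.InjOn f ↑(hVerts H) ∧ ∀ e ∈ H, e.image f ∈ G

/-- `G →_r H`: every `r`-coloring of the edges of `G` yields a monochromatic copy of `H`. -/
def Arrows (r : ℕ) (G H : Finset (Finset ℕ)) : Prop :=
  ∀ χ : Finset ℕ → Fin r, ∃ c : Fin r, IsCopy H (G.filter fun e => χ e = c)

/-- The `r`-color size-Ramsey number of `H`: the minimum number of edges of a
`k`-uniform hypergraph `G` with `G →_r H`. -/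
noncomputable def sizeRamsey (k r : ℕ) (H : Finset (Finset ℕ)) : ℕ :=
  sInf {m | ∃ G : Finset (Finset ℕ), IsUniform k G ∧ Arrows r G H ∧ G.card = m}

/-- The `r`-color Ramsey number of `H`: the minimum number of vertices of a
`k`-uniform hypergraph `G` with `G →_r H`. -/
noncomputable def vertexRamsey (k r : ℕ) (H : Finset (Finset ℕ)) : ℕ :=
  sInf {m | ∃ G : Finset (Finset ℕ), IsUniform k G ∧ Arrows r G H ∧ (hVerts G).card = m}

/-- The `(k,ℓ)`-path with `m` edges: edge `i` (for `0 ≤ i < m`) is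
`{i(k-ℓ), i(k-ℓ)+1, …, i(k-ℓ)+k-1}`. -/
def pathWithEdges (k l m : ℕ) : Finset (Finset ℕ) :=
  (Finset.range m).image fun i => (Finset.range k).image fun j => i * (k - l) + j

/-- The `(k,ℓ)`-path on `n` vertices, `P_n^{(k,ℓ)}`; it has `(n-ℓ)/(k-ℓ)` edges. -/
def hPath (k l n : ℕ) : Finset (Finset ℕ) :=
  pathWithEdges k l ((n - l) / (k - l))


/-- `G →_r 𝓗` for a family `𝓗`: every `r`-coloring of the edges of `G` yields a
monochromatic copy of some member of `𝓗`. -/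
def ArrowsFam (r : ℕ) (G : Finset (Finset ℕ)) (ℋ : Set (Finset (Finset ℕ))) : Prop :=
  ∀ χ : Finset ℕ → Fin r, ∃ c : Fin r, ∃ H ∈ ℋ, IsCopy H (G.filter fun e => χ e = c)

/-- The `r`-color size-Ramsey number of a family `𝓗`. -/
noncomputable def sizeRamseyFam (k r : ℕ) (ℋ : Set (Finset (Finset ℕ))) : ℕ :=
  sInf {m | ∃ G : Finset (Finset ℕ), IsUniform k G ∧ ArrowsFam r G ℋ ∧ G.card = m}

/-- The `r`-color Ramsey number of a family `𝓗`. -/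
noncomputable def vertexRamseyFam (k r : ℕ) (ℋ : Set (Finset (Finset ℕ))) : ℕ :=
  sInf {m | ∃ G : Finset (Finset ℕ), IsUniform k G ∧ ArrowsFam r G ℋ ∧ (hVerts G).card = m}

/-- The link graph of a vertex `v` in a hypergraph `H`. -/
def linkGraph (H : Finset (Finset ℕ)) (v : ℕ) : Finset (Finset ℕ) :=
  (H.filter fun e => v ∈ e).image fun e => e.erase v

/-!
Take a `k`-graph `G` with `G →_r 𝓗` and `R̂_r(𝓗)` edges, and let `U` be the set of vertices
whose link in `G` does not arrow `F`. Fix for each `u ∈ U` a colouring of its link with no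
monochromatic `F`. Given any colouring of the edges of `G` missing `U`, extend it by colouring
each edge `e` meeting `U` with the colour of `e ∖ {u}` in the link of the least `u ∈ e ∩ U`.
A monochromatic copy of some `H ∈ 𝓗` cannot touch `U`: at its least vertex `u` in `U`, the link
of `H` would give a monochromatic `F` in the link of `u`. So the edges missing `U` still arrow
`𝓗`, whence `R_r(𝓗) ≤ |V(G) ∖ U|`, while each vertex outside `U` has degree at least `R̂_r(F)`.
Summing degrees, `R̂_r(F) · R_r(𝓗) ≤ k · R̂_r(𝓗)`.
-/

section Hypergraph

variable {k : ℕ} {G : Finset (Finset ℕ)}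

theorem mem_hVerts {v : ℕ} : v ∈ hVerts G ↔ ∃ e ∈ G, v ∈ e := by
  simp [hVerts]

theorem subset_hVerts {e : Finset ℕ} (he : e ∈ G) : e ⊆ hVerts G :=
  fun _ hv => mem_hVerts.2 ⟨e, he, hv⟩

theorem mem_linkGraph {v : ℕ} {a : Finset ℕ} :
    a ∈ linkGraph G v ↔ ∃ e ∈ G, v ∈ e ∧ e.erase v = a := by
  simp [linkGraph, and_assoc]

theorem IsUniform.linkGraph (hG : IsUniform k G) (v : ℕ) :
    IsUniform (k - 1) (linkGraph G v) := by
  intro a ha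
  obtain ⟨e, he, hve, rfl⟩ := mem_linkGraph.1 ha
  rw [card_erase_of_mem hve, hG e he]

theorem card_linkGraph_le (v : ℕ) : #(linkGraph G v) ≤ #{e ∈ G | v ∈ e} :=
  card_image_le

theorem IsUniform.sum_degree_eq (hG : IsUniform k G) :
    ∑ v ∈ hVerts G, #{e ∈ G | v ∈ e} = k * #G := by
  have hverts : ∀ e ∈ G, (hVerts G).bipartiteBelow (· ∈ ·) e = e := fun e he =>
    (filter_mem_eq_inter).trans (inter_eq_right.2 (subset_hVerts he))
  calc ∑ v ∈ hVerts G, #{e ∈ G | v ∈ e}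
      = ∑ e ∈ G, #((hVerts G).bipartiteBelow (· ∈ ·) e) :=
        sum_card_bipartiteAbove_eq_sum_card_bipartiteBelow _
    _ = ∑ _e ∈ G, k := sum_congr rfl fun e he => by rw [hverts e he, hG e he]
    _ = k * #G := by rw [sum_const, smul_eq_mul, mul_comm]

end Hypergraph

section Copies

variable {G G' H F : Finset (Finset ℕ)}

theorem IsCopy.mono (h : IsCopy H G) (hG : G ⊆ G') : IsCopy H G' :=
  let ⟨f, hf, hfH⟩ := h
  ⟨f, hf, fun e he => hG (hfH e he)⟩

theorem IsCopy.trans (hFH : IsCopy F H) (hHG : IsCopy H G) : IsCopy F G := by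
  obtain ⟨f, hf, hfF⟩ := hFH
  obtain ⟨g, hg, hgH⟩ := hHG
  have hmaps : Set.MapsTo f ↑(hVerts F) ↑(hVerts H) := by
    intro x hx
    obtain ⟨a, ha, hxa⟩ := mem_hVerts.1 hx
    exact subset_hVerts (hfF a ha) (mem_image_of_mem f hxa)
  refine ⟨g ∘ f, hg.comp hf hmaps, fun a ha => ?_⟩
  rw [← image_image]
  exact hgH _ (hfF a ha)

theorem isCopy_linkGraph_image {f : ℕ → ℕ} (hf : Set.InjOn f ↑(hVerts H)) (v : ℕ) :
    IsCopy (linkGraph H v) (linkGraph (H.image (image f)) (f v)) := by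
  refine ⟨f, hf.mono fun x hx => ?_, fun a ha => ?_⟩
  · obtain ⟨a, ha, hxa⟩ := mem_hVerts.1 hx
    obtain ⟨e, he, -, rfl⟩ := mem_linkGraph.1 ha
    exact subset_hVerts he (mem_of_mem_erase hxa)
  · obtain ⟨e, he, hve, rfl⟩ := mem_linkGraph.1 ha
    have hfe : Set.InjOn f ↑e := hf.mono (by exact_mod_cast subset_hVerts he)
    refine mem_linkGraph.2 ⟨e.image f, mem_image_of_mem _ he, mem_image_of_mem f hve, ?_⟩
    rw [erase_eq, erase_eq, image_sdiff_of_injOn hfe (singleton_subset_iff.2 hve),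
      image_singleton]

end Copies

section RamseyNumbers

variable {k r : ℕ} {G F : Finset (Finset ℕ)} {ℋ : Set (Finset (Finset ℕ))}

theorem sizeRamsey_le_card (hG : IsUniform k G) (h : Arrows r G F) : sizeRamsey k r F ≤ #G :=
  Nat.sInf_le ⟨G, hG, h, rfl⟩

theorem vertexRamseyFam_le_card_hVerts (hG : IsUniform k G) (h : ArrowsFam r G ℋ) :
    vertexRamseyFam k r ℋ ≤ #(hVerts G) :=
  Nat.sInf_le ⟨G, hG, h, rfl⟩

end RamseyNumbers

section LinkColoring

variable {r : ℕ} {U : Finset ℕ} (ξ : ∀ u ∈ U, Finset ℕ → Fin r)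
  (χ : Finset ℕ → Fin r)

noncomputable def linkColoring (e : Finset ℕ) : Fin r :=
  if h : (e ∩ U).Nonempty then
    ξ _ (mem_of_mem_inter_right ((e ∩ U).min'_mem h)) (e.erase ((e ∩ U).min' h))
  else χ e

theorem linkColoring_of_disjoint {e : Finset ℕ} (he : Disjoint e U) :
    linkColoring ξ χ e = χ e := by
  rw [linkColoring, dif_neg (not_nonempty_iff_eq_empty.2 (disjoint_iff_inter_eq_empty.1 he))]

theorem linkColoring_of_forall_le {e : Finset ℕ} {u : ℕ} (hue : u ∈ e) (huU : u ∈ U)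
    (hmin : ∀ w ∈ e ∩ U, u ≤ w) : linkColoring ξ χ e = ξ u huU (e.erase u) := by
  have hne : (e ∩ U).Nonempty := ⟨u, mem_inter.2 ⟨hue, huU⟩⟩
  have hmin' : (e ∩ U).min' hne = u :=
    le_antisymm (min'_le _ _ (mem_inter.2 ⟨hue, huU⟩)) (hmin _ (min'_mem _ hne))
  simp only [linkColoring, dif_pos hne, hmin']

end LinkColoring

section Reduction

variable {r : ℕ} {G H F : Finset (Finset ℕ)} {ℋ : Set (Finset (Finset ℕ))} {U : Finset ℕ}

theorem disjoint_image_hVerts_of_linkColoring {ξ : ∀ u ∈ U, Finset ℕ → Fin r}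
    {χ : Finset ℕ → Fin r} {c : Fin r} {f : ℕ → ℕ}
    (hξ : ∀ u hu c, ¬ IsCopy F ((linkGraph G u).filter fun a => ξ u hu a = c))
    (hlink : ∀ v ∈ hVerts H, IsCopy F (linkGraph H v)) (hf : Set.InjOn f ↑(hVerts H))
    (hfH : ∀ e ∈ H, e.image f ∈ G.filter fun e => linkColoring ξ χ e = c) :
    Disjoint ((hVerts H).image f) U := by
  by_contra hmeet
  have hS : ((hVerts H).image f ∩ U).Nonempty :=
    nonempty_iff_ne_empty.2 fun h => hmeet (disjoint_iff_inter_eq_empty.2 h)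
  set u := ((hVerts H).image f ∩ U).min' hS
  obtain ⟨hu, huU⟩ := mem_inter.1 (min'_mem _ hS)
  obtain ⟨v, hv, hvu⟩ := mem_image.1 hu
  refine hξ u huU c (((hlink v hv).trans (isCopy_linkGraph_image hf v)).mono fun a ha => ?_)
  obtain ⟨_, he', hue, rfl⟩ := mem_linkGraph.1 ha
  obtain ⟨e, he, rfl⟩ := mem_image.1 he'
  rw [hvu] at hue ⊢
  obtain ⟨heG, hc⟩ := mem_filter.1 (hfH e he)
  have hmin : ∀ w ∈ e.image f ∩ U, u ≤ w := fun w hw =>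
    min'_le _ _ (inter_subset_inter_right (image_subset_image (subset_hVerts he)) hw)
  rw [linkColoring_of_forall_le ξ χ hue huU hmin] at hc
  exact mem_filter.2 ⟨mem_linkGraph.2 ⟨_, heG, hue, rfl⟩, hc⟩

theorem ArrowsFam.filter_disjoint
    (hlink : ∀ H ∈ ℋ, ∀ v ∈ hVerts H, IsCopy F (linkGraph H v))
    (hU : ∀ u ∈ U, ¬ Arrows r (linkGraph G u) F) (hG : ArrowsFam r G ℋ) :
    ArrowsFam r {e ∈ G | Disjoint e U} ℋ := by
  simp only [Arrows, not_forall, not_exists] at hU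
  choose ξ hξ using hU
  intro χ
  obtain ⟨c, H, hH, f, hf, hfH⟩ := hG (linkColoring ξ χ)
  have hdisj := disjoint_image_hVerts_of_linkColoring hξ (hlink H hH) hf hfH
  refine ⟨c, H, hH, f, hf, fun e he => ?_⟩
  have hed : Disjoint (e.image f) U := hdisj.mono_left (image_subset_image (subset_hVerts he))
  obtain ⟨heG, hc⟩ := mem_filter.1 (hfH e he)
  rw [linkColoring_of_disjoint ξ χ hed] at hc
  exact mem_filter.2 ⟨mem_filter.2 ⟨heG, hed⟩, hc⟩

end Reduction

section Counting

variable {k r : ℕ} {G F : Finset (Finset ℕ)} {ℋ : Set (Finset (Finset ℕ))}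

theorem sizeRamsey_mul_card_le (hG : IsUniform k G) {W : Finset ℕ} (hW : W ⊆ hVerts G)
    (harrow : ∀ v ∈ W, Arrows r (linkGraph G v) F) :
    sizeRamsey (k - 1) r F * #W ≤ k * #G :=
  calc sizeRamsey (k - 1) r F * #W = #W • sizeRamsey (k - 1) r F := by
        rw [smul_eq_mul, mul_comm]
    _ ≤ ∑ v ∈ W, #{e ∈ G | v ∈ e} := card_nsmul_le_sum _ _ _ fun v hv =>
        (sizeRamsey_le_card (hG.linkGraph v) (harrow v hv)).trans (card_linkGraph_le v)
    _ ≤ ∑ v ∈ hVerts G, #{e ∈ G | v ∈ e} := sum_le_sum_of_subset hW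
    _ = k * #G := hG.sum_degree_eq

theorem sizeRamsey_mul_vertexRamseyFam_le_card
    (hlink : ∀ H ∈ ℋ, ∀ v ∈ hVerts H, IsCopy F (linkGraph H v))
    (hG : IsUniform k G) (hGa : ArrowsFam r G ℋ) :
    sizeRamsey (k - 1) r F * vertexRamseyFam k r ℋ ≤ k * #G := by
  classical
  set U := {v ∈ hVerts G | ¬ Arrows r (linkGraph G v) F}
  have hG'a := hGa.filter_disjoint hlink (U := U) fun u hu => (mem_filter.1 hu).2
  have hG' : IsUniform k {e ∈ G | Disjoint e U} := fun e he => hG e (mem_filter.1 he).1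
  have hverts : hVerts {e ∈ G | Disjoint e U} ⊆ hVerts G \ U := fun v hv => by
    obtain ⟨e, he, hve⟩ := mem_hVerts.1 hv
    obtain ⟨heG, heU⟩ := mem_filter.1 he
    exact mem_sdiff.2 ⟨subset_hVerts heG hve, disjoint_left.1 heU hve⟩
  have harrow : ∀ v ∈ hVerts G \ U, Arrows r (linkGraph G v) F := fun v hv => by
    obtain ⟨hv, hvU⟩ := mem_sdiff.1 hv
    by_contra h
    exact hvU (mem_filter.2 ⟨hv, h⟩)
  calc sizeRamsey (k - 1) r F * vertexRamseyFam k r ℋ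
      ≤ sizeRamsey (k - 1) r F * #(hVerts G \ U) :=
        Nat.mul_le_mul_left _
          ((vertexRamseyFam_le_card_hVerts hG' hG'a).trans (card_le_card hverts))
    _ ≤ k * #G := sizeRamsey_mul_card_le hG sdiff_subset harrow

theorem sizeRamsey_mul_vertexRamseyFam_le
    (hlink : ∀ H ∈ ℋ, ∀ v ∈ hVerts H, IsCopy F (linkGraph H v)) :
    sizeRamsey (k - 1) r F * vertexRamseyFam k r ℋ ≤ k * sizeRamseyFam k r ℋ := by
  rcases Set.eq_empty_or_nonempty
      {m | ∃ G : Finset (Finset ℕ), IsUniform k G ∧ ArrowsFam r G ℋ ∧ #G = m} with h | h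
  · have hvertex : vertexRamseyFam k r ℋ = 0 := by
      rw [vertexRamseyFam, Nat.sInf_eq_zero, Set.eq_empty_iff_forall_notMem]
      exact Or.inr fun _ ⟨G, hG, hGa, _⟩ =>
        Set.eq_empty_iff_forall_notMem.1 h _ ⟨G, hG, hGa, rfl⟩
    rw [hvertex, mul_zero]
    exact Nat.zero_le _
  · obtain ⟨G, hG, hGa, hcard⟩ := Nat.sInf_mem h
    rw [sizeRamseyFam, ← hcard]
    exact sizeRamsey_mul_vertexRamseyFam_le_card hlink hG hGa

end Counting

theorem stmt17_general (k r : ℕ)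
    (ℋ : Set (Finset (Finset ℕ)))
    (F : Finset (Finset ℕ))
    (hlink : ∀ H ∈ ℋ, ∀ v ∈ hVerts H, IsCopy F (linkGraph H v)) :
    (sizeRamseyFam k r ℋ : ℝ) ≥
      (1 / k) * sizeRamsey (k - 1) r F * vertexRamseyFam k r ℋ := by
  have h := sizeRamsey_mul_vertexRamseyFam_le (k := k) (r := r) hlink
  rcases Nat.eq_zero_or_pos k with rfl | hk
  · simp
  · rw [ge_iff_le, mul_assoc, one_div, inv_mul_le_iff₀ (by positivity)]
    exact_mod_cast h

theorem stmt17 (k r : ℕ) (hk : 2 ≤ k) (hr : 2 ≤ r)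
    (ℋ : Set (Finset (Finset ℕ))) (hne : ℋ.Nonempty)
    (hunif : ∀ H ∈ ℋ, IsUniform k H)
    (F : Finset (Finset ℕ)) (hF : IsUniform (k - 1) F)
    (hlink : ∀ H ∈ ℋ, ∀ v ∈ hVerts H, IsCopy F (linkGraph H v)) :
    (sizeRamseyFam k r ℋ : ℝ) ≥
      (1 / k) * sizeRamsey (k - 1) r F * vertexRamseyFam k r ℋ :=
  stmt17_general k r ℋ F hlink
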